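/- arXiv:2105.13748 — 3 statements merged into one kernel-verified Lean document; each statement's English description precedes it below -/
import Mathlib

section
/- For each integer k ≥ 2, the unique positive root s_k of s^{k+1} = ∑_{i=0}^{k} s^i satisfies 2 - 2^{-k-1}·e < s_k < 2 - 2^{-k-1}, where e is the base of natural logarithms. -/
/-!
Multiplying the equation by `s - 1` turns it into `s ^ (k + 1) * (2 - s) = 1`, so `t = 2 - s` is
`1 / s ^ (k + 1)`. Since `s > 0` forces `s ≥ 1`, every term of the geometric sum is at least `1`,
whence `s ^ (k + 1) ≥ k + 1` and `(k + 1) t ≤ 1`. The upper bound is `s < 2`. For the lower bound,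
Bernoulli's inequality gives `s ^ (k + 1) = 2 ^ (k + 1) (1 - t / 2) ^ (k + 1) ≥ 2 ^ k`, so
`2 ^ (k + 1) t ≤ 2 < e`.
-/

open Finset

theorem pow_mul_two_sub_eq_one_of_pow_eq_geom_sum {R : Type*} [CommRing R] {x : R} {n : ℕ}
    (h : x ^ n = ∑ i ∈ range n, x ^ i) : x ^ n * (2 - x) = 1 := by
  have hgeom := geom_sum_mul x n
  rw [← h] at hgeom
  linear_combination -hgeom

theorem one_le_of_pow_eq_geom_sum {x : ℝ} {n : ℕ} (hx : 0 < x)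
    (h : x ^ (n + 1) = ∑ i ∈ range (n + 1), x ^ i) : 1 ≤ x := by
  have hsum : (1 : ℝ) ≤ x ^ (n + 1) := by
    rw [h]
    simpa using single_le_sum (fun i _ ↦ pow_nonneg hx.le i) (mem_range.2 n.succ_pos)
  exact (one_le_pow_iff_of_nonneg hx.le n.succ_ne_zero).1 hsum

theorem succ_le_pow_of_pow_eq_geom_sum {x : ℝ} {n : ℕ} (hx : 0 < x)
    (h : x ^ (n + 1) = ∑ i ∈ range (n + 1), x ^ i) : (n + 1 : ℝ) ≤ x ^ (n + 1) := by
  have hx1 := one_le_of_pow_eq_geom_sum hx h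
  have hsum := card_nsmul_le_sum (range (n + 1)) (x ^ ·) 1 fun i _ ↦ one_le_pow₀ hx1
  rw [card_range, nsmul_one, ← h] at hsum
  exact_mod_cast hsum

theorem two_pow_le_two_mul_pow {x : ℝ} {n : ℕ} (hx : -2 ≤ x) (hn : n * (2 - x) ≤ 1) :
    (2 : ℝ) ^ n ≤ 2 * x ^ n := by
  have hbernoulli := one_add_mul_le_pow (a := x / 2 - 1) (by linarith) n
  calc (2 : ℝ) ^ n = 2 * (2 ^ n * (1 / 2)) := by ring
    _ ≤ 2 * (2 ^ n * (1 + n * (x / 2 - 1))) := by gcongr; linarith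
    _ ≤ 2 * (2 ^ n * (1 + (x / 2 - 1)) ^ n) := by gcongr
    _ = 2 * x ^ n := by rw [← mul_pow]; ring_nf

theorem positive_root_bounds_general (k : ℕ) (s : ℝ)
    (hs : 0 < s) (hroot : s ^ (k + 1) = ∑ i ∈ Finset.range (k + 1), s ^ i) :
    2 - Real.exp 1 / 2 ^ (k + 1) < s ∧ s < 2 - 1 / 2 ^ (k + 1) := by
  have hmul := pow_mul_two_sub_eq_one_of_pow_eq_geom_sum hroot
  have hlt2 : s < 2 := by nlinarith [pow_pos hs (k + 1)]
  have htwo : (0 : ℝ) < 2 ^ (k + 1) := by positivity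
  have hupper : 1 < 2 ^ (k + 1) * (2 - s) := by
    rw [← hmul]
    exact mul_lt_mul_of_pos_right (pow_lt_pow_left₀ hlt2 hs.le k.succ_ne_zero) (by linarith)
  have hlower : 2 ^ (k + 1) * (2 - s) < Real.exp 1 := by
    have hsucc : ((k + 1 : ℕ) : ℝ) * (2 - s) ≤ 1 := by
      rw [← hmul]; push_cast
      exact mul_le_mul_of_nonneg_right (succ_le_pow_of_pow_eq_geom_sum hs hroot) (by linarith)
    calc 2 ^ (k + 1) * (2 - s) ≤ 2 * s ^ (k + 1) * (2 - s) :=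
          mul_le_mul_of_nonneg_right (two_pow_le_two_mul_pow (by linarith) hsucc) (by linarith)
      _ = 2 := by rw [mul_assoc, hmul, mul_one]
      _ < Real.exp 1 := by simpa [one_add_one_eq_two] using Real.add_one_lt_exp one_ne_zero
  constructor
  · rw [sub_lt_comm, lt_div_iff₀ htwo]; linarith
  · rw [lt_sub_comm, div_lt_iff₀ htwo]; linarith

theorem positive_root_bounds (k : ℕ) (hk : 2 ≤ k) (s : ℝ)
    (hs : 0 < s) (hroot : s ^ (k + 1) = ∑ i ∈ Finset.range (k + 1), s ^ i) :
    2 - Real.exp 1 / 2 ^ (k + 1) < s ∧ s < 2 - 1 / 2 ^ (k + 1) :=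
  positive_root_bounds_general k s hs hroot
end

section
/- The sequence (s_k)_{k≥1}, where s_k is the unique positive root of s^{k+1} = ∑_{i=0}^{k} s^i, is strictly increasing: s_k < s_{k+1} for all k ≥ 1. -/
/-!
Multiplying `s ^ n = ∑ i < n, s ^ i` by `s` gives `s ^ (n + 1) = ∑ i < n + 1, s ^ i - 1`, so
`s ^ (n + 1) < ∑ i < n + 1, s ^ i`. But `∑ i < n + 1, x ^ i / x ^ (n + 1)` is antitone in `x > 0`
and equals `1` at `t`, so `t ≤ s` would give the reverse inequality.
-/

open Finset

section GeomSum

variable {R : Type*}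

theorem pow_succ_lt_geom_sum_of_pow_eq_geom_sum [CommSemiring R] [PartialOrder R]
    [IsStrictOrderedRing R] {s : R} {n : ℕ} (h : s ^ n = ∑ i ∈ range n, s ^ i) :
    s ^ (n + 1) < ∑ i ∈ range (n + 1), s ^ i := by
  rw [geom_sum_succ, pow_succ', h]
  exact lt_add_one _

theorem pow_mul_geom_sum_le_of_le [CommSemiring R] [PartialOrder R] [IsOrderedRing R]
    {x y : R} (hx : 0 ≤ x) (hxy : x ≤ y) (n : ℕ) :
    x ^ n * ∑ i ∈ range n, y ^ i ≤ y ^ n * ∑ i ∈ range n, x ^ i := by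
  rw [mul_sum, mul_sum]
  refine sum_le_sum fun i hi => ?_
  have hin : i ≤ n := (mem_range.mp hi).le
  have hy : 0 ≤ y := hx.trans hxy
  calc x ^ n * y ^ i = x ^ (n - i) * (x ^ i * y ^ i) := by rw [← pow_mul_pow_sub x hin]; ring
    _ ≤ y ^ (n - i) * (x ^ i * y ^ i) := by gcongr
    _ = y ^ n * x ^ i := by rw [← pow_mul_pow_sub y hin]; ring

end GeomSum

theorem positive_roots_strictly_increasing_general (k : ℕ) (s t : ℝ)
    (hroots : s ^ (k + 1) = ∑ i ∈ Finset.range (k + 1), s ^ i)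
    (ht : 0 < t) (hroott : t ^ (k + 2) = ∑ i ∈ Finset.range (k + 2), t ^ i) :
    s < t := by
  by_contra! hts
  have hs_lt := pow_succ_lt_geom_sum_of_pow_eq_geom_sum hroots
  have hcompare := pow_mul_geom_sum_le_of_le ht.le hts (k + 2)
  rw [← hroott, mul_comm (s ^ _)] at hcompare
  exact hs_lt.not_ge (le_of_mul_le_mul_left hcompare (pow_pos ht _))

theorem positive_roots_strictly_increasing (k : ℕ) (hk : 1 ≤ k) (s t : ℝ)
    (hs : 0 < s) (hroots : s ^ (k + 1) = ∑ i ∈ Finset.range (k + 1), s ^ i)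
    (ht : 0 < t) (hroott : t ^ (k + 2) = ∑ i ∈ Finset.range (k + 2), t ^ i) :
    s < t :=
  positive_roots_strictly_increasing_general k s t hroots ht hroott
end

section
/- The sequence (s_k)_{k≥1}, where s_k is the unique positive root of s^{k+1} = ∑_{i=0}^{k} s^i, converges to 2 as k → ∞. -/
/-!
Subtracting the geometric-sum identity `(∑ i < n, s ^ i) (s - 1) = s ^ n - 1` from the defining
equation `s ^ n = ∑ i < n, s ^ i` gives `(∑ i < n, s ^ i) (2 - s) = 1`. For `n = k + 1 ≥ 2` the
root satisfies `s > 1`, so the sum is at least `k + 1` and `0 < 2 - s ≤ 1 / (k + 1)`.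
-/

open Finset Filter Topology

section GeomSum

variable {R : Type*}

theorem geom_sum_mul_two_sub_eq_one [CommRing R] {x : R} {n : ℕ}
    (h : x ^ n = ∑ i ∈ range n, x ^ i) : (∑ i ∈ range n, x ^ i) * (2 - x) = 1 := by
  have hgeom := geom_sum_mul x n
  rw [← h] at hgeom ⊢
  linear_combination -hgeom

variable [Field R] [LinearOrder R] [IsStrictOrderedRing R]

theorem one_lt_of_pow_succ_eq_geom_sum {x : R} {k : ℕ} (hx : 0 ≤ x) (hk : k ≠ 0)
    (h : x ^ (k + 1) = ∑ i ∈ range (k + 1), x ^ i) : 1 < x := by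
  by_contra! hx1
  have hpow : x ^ (k + 1) ≤ x ^ k := pow_le_pow_of_le_one hx hx1 k.le_succ
  have hsum : 1 ≤ ∑ i ∈ range k, x ^ i := by
    simpa using single_le_sum (fun i _ => pow_nonneg hx i) (mem_range.2 (Nat.pos_of_ne_zero hk))
  rw [sum_range_succ] at h
  linarith

theorem lt_two_of_pow_eq_geom_sum {x : R} {n : ℕ} (hx : 0 ≤ x) (hn : n ≠ 0)
    (h : x ^ n = ∑ i ∈ range n, x ^ i) : x < 2 := by
  have hprod := geom_sum_mul_two_sub_eq_one h
  have hsum := geom_sum_pos hx hn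
  by_contra! hx2
  nlinarith

theorem two_sub_le_of_pow_succ_eq_geom_sum {x : R} {k : ℕ} (hx : 0 ≤ x) (hk : k ≠ 0)
    (h : x ^ (k + 1) = ∑ i ∈ range (k + 1), x ^ i) : 2 - x ≤ 1 / (k + 1) := by
  have hx1 := one_lt_of_pow_succ_eq_geom_sum hx hk h
  have hsum : (k + 1 : R) ≤ ∑ i ∈ range (k + 1), x ^ i := by
    simpa using card_nsmul_le_sum (range (k + 1)) (x ^ ·) 1 fun i _ => one_le_pow₀ hx1.le
  rw [le_div_iff₀ (by positivity)]
  nlinarith [geom_sum_mul_two_sub_eq_one h, lt_two_of_pow_eq_geom_sum hx k.succ_ne_zero h]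

end GeomSum

theorem positive_roots_tendsto_two (s : ℕ → ℝ)
    (h : ∀ k, 1 ≤ k → 0 < s k ∧ s k ^ (k + 1) = ∑ i ∈ Finset.range (k + 1), s k ^ i) :
    Filter.Tendsto s Filter.atTop (nhds 2) := by
  have hlower : Tendsto (fun k : ℕ => 2 - 1 / ((k : ℝ) + 1)) atTop (𝓝 2) := by
    simpa using tendsto_const_nhds.sub (tendsto_one_div_add_atTop_nhds_zero_nat (𝕜 := ℝ))
  refine tendsto_of_tendsto_of_tendsto_of_le_of_le' hlower tendsto_const_nhds ?_ ?_
    <;> filter_upwards [eventually_ge_atTop 1] with k hk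
    <;> obtain ⟨hpos, hroot⟩ := h k hk
  · linarith [two_sub_le_of_pow_succ_eq_geom_sum hpos.le (by omega) hroot]
  · exact (lt_two_of_pow_eq_geom_sum hpos.le k.succ_ne_zero hroot).le
end
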